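/- For every integer j ≥ 1, every integer n with 0 ≤ n ≤ j−1, and every integer x with 0 ≤ x ≤ j−1, the following identity of terminating hypergeometric series holds: j·₃F₂(−n, n, −x−1; 1/2, −j; 1) = (x+1)·₃F₂(−n, n, −x; 1/2, −j+1; 1) − (x−j+1)·₃F₂(−n, n, −x−1; 1/2, −j+1; 1). -/

import Mathlib

/-!
Each term is contiguous on its own: from `b (b+1)_k = (b+k) (b)_k` and `d (d+1)_k = (d+k) (d)_k`,
`d (b)_k/(d)_k = b (b+1)_k/(d+1)_k + (d-b) (b)_k/(d+1)_k`, so `₃F₂` satisfies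
`d F(b; d) = b F(b+1; d+1) + (d-b) F(b; d+1)` whenever no `(d)_k`, `(d+1)_k` with `k ≤ n` vanishes.
With `b = -x-1` and `d = -j` this is the identity.
-/

/-- The Pochhammer symbol `(a)_k = a (a+1) ⋯ (a+k-1)`. -/
noncomputable def poch (a : ℝ) (k : ℕ) : ℝ := ∏ i ∈ Finset.range k, (a + i)

/-- The terminating hypergeometric series
`₃F₂(−n, a, b; c, d; 1) = ∑_{k=0}^n (−n)_k (a)_k (b)_k / ((c)_k (d)_k k!)`. -/
noncomputable def hyp3F2 (n : ℕ) (a b c d : ℝ) : ℝ :=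
  ∑ k ∈ Finset.range (n + 1),
    poch (-(n : ℝ)) k * poch a k * poch b k / (poch c k * poch d k * (Nat.factorial k : ℝ))

lemma poch_succ_right (a : ℝ) (k : ℕ) : poch a (k + 1) = poch a k * (a + k) :=
  Finset.prod_range_succ _ _

lemma poch_succ_left (a : ℝ) (k : ℕ) : poch a (k + 1) = a * poch (a + 1) k := by
  unfold poch
  rw [Finset.prod_range_succ', Nat.cast_zero, add_zero, mul_comm]
  congr 1
  refine Finset.prod_congr rfl fun i _ => ?_
  push_cast
  ring

lemma mul_poch_add_one (a : ℝ) (k : ℕ) : a * poch (a + 1) k = (a + k) * poch a k := by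
  rw [← poch_succ_left, poch_succ_right, mul_comm]

lemma poch_ne_zero {a : ℝ} {k : ℕ} (h : ∀ i < k, a + i ≠ 0) : poch a k ≠ 0 :=
  Finset.prod_ne_zero_iff.mpr fun i hi => h i (Finset.mem_range.mp hi)

lemma mul_poch_div_poch_contiguous (b d : ℝ) (k : ℕ) (hd : poch d k ≠ 0)
    (hd' : poch (d + 1) k ≠ 0) :
    d * (poch b k / poch d k)
      = b * (poch (b + 1) k / poch (d + 1) k) + (d - b) * (poch b k / poch (d + 1) k) := by
  have hb := mul_poch_add_one b k
  have hd₁ := mul_poch_add_one d k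
  field_simp
  linear_combination poch b k * hd₁ - poch d k * hb

theorem hyp3F2_contiguous (n : ℕ) (a b c d : ℝ)
    (hd : ∀ k ≤ n, poch d k ≠ 0 ∧ poch (d + 1) k ≠ 0) :
    d * hyp3F2 n a b c d
      = b * hyp3F2 n a (b + 1) c (d + 1) + (d - b) * hyp3F2 n a b c (d + 1) := by
  unfold hyp3F2
  rw [Finset.mul_sum, Finset.mul_sum, Finset.mul_sum, ← Finset.sum_add_distrib]
  refine Finset.sum_congr rfl fun k hk => ?_
  obtain ⟨hdk, hdk'⟩ := hd k (Nat.lt_succ_iff.mp (Finset.mem_range.mp hk))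
  have termwise := congrArg
    (· * (poch (-(n : ℝ)) k * poch a k / (poch c k * (Nat.factorial k : ℝ))))
    (mul_poch_div_poch_contiguous b d k hdk hdk')
  convert termwise using 1 <;> ring

theorem stmt2_general (j n x : ℕ) (hn : n ≤ j - 1) :
    (j : ℝ) * hyp3F2 n (n : ℝ) (-(x : ℝ) - 1) (1/2) (-(j : ℝ))
      = ((x : ℝ) + 1) * hyp3F2 n (n : ℝ) (-(x : ℝ)) (1/2) (-(j : ℝ) + 1)
        - ((x : ℝ) - (j : ℝ) + 1) * hyp3F2 n (n : ℝ) (-(x : ℝ) - 1) (1/2) (-(j : ℝ) + 1) := by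
  have hd : ∀ k ≤ n, poch (-(j : ℝ)) k ≠ 0 ∧ poch (-(j : ℝ) + 1) k ≠ 0 := fun k hk =>
    ⟨poch_ne_zero fun i hi => by
        rw [Ne, neg_add_eq_zero]; exact_mod_cast (by omega : j ≠ i),
      poch_ne_zero fun i hi => by
        rw [Ne, add_assoc, neg_add_eq_zero]; exact_mod_cast (by omega : j ≠ 1 + i)⟩
  have h := hyp3F2_contiguous n n (-(x : ℝ) - 1) (1/2) (-(j : ℝ)) hd
  rw [sub_add_cancel] at h
  linear_combination -h

theorem stmt2 (j n x : ℕ) (hj : 1 ≤ j) (hn : n ≤ j - 1) (hx : x ≤ j - 1) :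
    (j : ℝ) * hyp3F2 n (n : ℝ) (-(x : ℝ) - 1) (1/2) (-(j : ℝ))
      = ((x : ℝ) + 1) * hyp3F2 n (n : ℝ) (-(x : ℝ)) (1/2) (-(j : ℝ) + 1)
        - ((x : ℝ) - (j : ℝ) + 1) * hyp3F2 n (n : ℝ) (-(x : ℝ) - 1) (1/2) (-(j : ℝ) + 1) :=
  stmt2_general j n x hn
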